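/- Let 1 < j < m ≤ n and set x_j^{(m)} = (ω−1)/2 + Σ_{r=1}^{j−1}(s_{rm} − e_{rm}) ∈ B_n(ω). Then s_{jm} x_j^{(m)} = x_j s_{jm}, where x_j = (ω−1)/2 + Σ_{r=1}^{j−1}(s_{rj} − e_{rj}) is the Jucys–Murphy element. -/

import Mathlib

/-!
Common definitions for the fusion procedure for the Brauer algebra
(Isaev–Molev, "Fusion procedure for the Brauer algebra").
-/

noncomputable section
open scoped BigOperators
open Classical

namespace BrauerFusion

/-- The base field `F = ℂ(ω)`. -/
abbrev F : Type := RatFunc ℂ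

/-- The indeterminate `ω ∈ ℂ(ω)`. -/
def ωF : F := RatFunc.X

/-- `s e : ℕ → A` satisfy the defining relations of the Brauer algebra `B_n(ω)`
over the commutative base `R`; here `s i`, `e i` represent the generators
`s_i`, `e_i` for `1 ≤ i ≤ n - 1` (values at other indices are irrelevant). -/
structure IsBrauer {R : Type*} {A : Type*} [CommRing R] [Ring A] [Algebra R A]
    (n : ℕ) (ω : R) (s e : ℕ → A) : Prop where
  ss : ∀ i, 1 ≤ i → i + 1 ≤ n → s i * s i = 1
  ee : ∀ i, 1 ≤ i → i + 1 ≤ n → e i * e i = ω • e i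
  se : ∀ i, 1 ≤ i → i + 1 ≤ n → s i * e i = e i
  es : ∀ i, 1 ≤ i → i + 1 ≤ n → e i * s i = e i
  ss_comm : ∀ i j, 1 ≤ i → j + 1 ≤ n → i + 1 < j → s i * s j = s j * s i
  ee_comm : ∀ i j, 1 ≤ i → j + 1 ≤ n → i + 1 < j → e i * e j = e j * e i
  se_comm : ∀ i j, 1 ≤ i → j + 1 ≤ n → i + 1 < j → s i * e j = e j * s i
  es_comm : ∀ i j, 1 ≤ i → j + 1 ≤ n → i + 1 < j → s j * e i = e i * s j
  braid : ∀ i, 1 ≤ i → i + 2 ≤ n → s i * s (i+1) * s i = s (i+1) * s i * s (i+1)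
  eee₁ : ∀ i, 1 ≤ i → i + 2 ≤ n → e i * e (i+1) * e i = e i
  eee₂ : ∀ i, 1 ≤ i → i + 2 ≤ n → e (i+1) * e i * e (i+1) = e (i+1)
  see : ∀ i, 1 ≤ i → i + 2 ≤ n → s i * e (i+1) * e i = s (i+1) * e i
  ees : ∀ i, 1 ≤ i → i + 2 ≤ n → e (i+1) * e i * s (i+1) = e (i+1) * s i

variable {A : Type*} [Ring A]

/-- The transposition `s_{ij} = s_i s_{i+1} ⋯ s_{j-2} s_{j-1} s_{j-2} ⋯ s_{i+1} s_i`
(for `i < j`), defined by `s_{i,i+1} = s_i` and `s_{ij} = s_i s_{i+1,j} s_i`. -/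
def sij (s : ℕ → A) (i j : ℕ) : A :=
  if h : i + 1 < j then s i * sij s (i+1) j * s i else s i
termination_by j - i
decreasing_by omega

/-- The element `e_{ij} = s_{i,j-1} e_{j-1} s_{i,j-1}` (for `i < j`), with `e_{i,i+1} = e_i`. -/
def eij (s e : ℕ → A) (i j : ℕ) : A :=
  if i + 1 < j then sij s i (j-1) * e (j-1) * sij s i (j-1) else e i

/-- `x_j^{(m)} = (ω-1)/2 + ∑_{r=1}^{j-1} (s_{rm} - e_{rm})`. -/
def jmM {R : Type*} [Field R] [Algebra R A] (ω : R) (s e : ℕ → A) (j m : ℕ) : A :=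
  algebraMap R A ((ω - 1) / 2) + ∑ r ∈ Finset.Icc 1 (j-1), (sij s r m - eij s e r m)

/-- The Jucys–Murphy element `x_r = (ω-1)/2 + ∑_{k=1}^{r-1} (s_{kr} - e_{kr})`. -/
def jm {R : Type*} [Field R] [Algebra R A] (ω : R) (s e : ℕ → A) (r : ℕ) : A :=
  jmM ω s e r r

/-- The pairs `(i, j)` with `1 ≤ i < j ≤ n` in lexicographic order. -/
def lexPairs (n : ℕ) : List (ℕ × ℕ) :=
  (List.range' 1 n).flatMap fun i =>
    ((List.range' 1 n).filter fun j => decide (i < j)).map fun j => (i, j)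

/-- The rational function
`Ψ(u_1,…,u_n) = ∏_{1≤i<j≤n} (1 - e_{ij}/(u_i+u_j)) ∏_{1≤i<j≤n} (1 - s_{ij}/(u_i-u_j))`,
with ordered products over the pairs `(i,j)` in lexicographic order. -/
def Psi {K : Type*} [Field K] [Algebra K A] (s e : ℕ → A) (n : ℕ) (u : ℕ → K) : A :=
  ((lexPairs n).map fun p => 1 - (u p.1 + u p.2)⁻¹ • eij s e p.1 p.2).prod *
  ((lexPairs n).map fun p => 1 - (u p.1 - u p.2)⁻¹ • sij s p.1 p.2).prod

/-- An updown tableau of length `n`: a sequence of Young diagrams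
`Λ_0 = ∅, Λ_1, …, Λ_n` in which `Λ_r` is obtained from `Λ_{r-1}` by adding
(`add r = true`) or removing (`add r = false`) the box `box r`. -/
structure UpDownTableau (n : ℕ) where
  shape : ℕ → YoungDiagram
  box : ℕ → ℕ × ℕ
  add : ℕ → Bool
  shape_zero : shape 0 = ⊥
  step_add : ∀ r, 1 ≤ r → r ≤ n → add r = true →
    box r ∉ shape (r-1) ∧ (shape r).cells = insert (box r) (shape (r-1)).cells
  step_rem : ∀ r, 1 ≤ r → r ≤ n → add r = false →
    box r ∉ shape r ∧ (shape (r-1)).cells = insert (box r) (shape r).cells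

/-- The content `c_r` of an updown tableau: `(ω-1)/2 + j - i` if the box `(i,j)` was
added at step `r`, and `-((ω-1)/2 + j - i)` if it was removed. -/
def content {R : Type*} [Field R] (ω : R) {n : ℕ} (T : UpDownTableau n) (r : ℕ) : R :=
  if T.add r then (ω - 1) / 2 + ((T.box r).2 : R) - ((T.box r).1 : R)
  else -((ω - 1) / 2 + ((T.box r).2 : R) - ((T.box r).1 : R))

/-- The content attached to a box `b` which can be removed from (`b ∈ μ`) or
added to (`b ∉ μ`) the diagram `μ`. -/
def boxContent {R : Type*} [Field R] (ω : R) (μ : YoungDiagram) (b : ℕ × ℕ) : R :=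
  if b ∈ μ then -((ω - 1) / 2 + (b.2 : R) - (b.1 : R))
  else (ω - 1) / 2 + (b.2 : R) - (b.1 : R)

/-- All boxes `(i,j)` with `i, j < N`, listed in lexicographic order. -/
def gridList (N : ℕ) : List (ℕ × ℕ) :=
  (List.range N).flatMap fun i => (List.range N).map fun j => (i, j)

/-- A box which can be added to, or removed from, the Young diagram `μ`
so that the result is again a Young diagram. -/
def isCandidate (μ : YoungDiagram) (b : ℕ × ℕ) : Prop :=
  (b ∉ μ ∧ ∃ ν : YoungDiagram, ν.cells = insert b μ.cells) ∨
  (b ∈ μ ∧ ∃ ν : YoungDiagram, μ.cells = insert b ν.cells)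

/-- The list of all boxes which can be added to or removed from `μ`. -/
def candList (μ : YoungDiagram) : List (ℕ × ℕ) :=
  (gridList (μ.card + 2)).filter fun b => decide (isCandidate μ b)

/-- The primitive idempotent `E_{(Λ_1,…,Λ_r)}`, defined recursively by `E = 1` for `r = 0`
and `E_T = E_U ∏_a (x_r - a)/(c_r - a)`, the product over the contents `a` of all boxes
(other than the box of step `r`) which can be added to or removed from `Λ_{r-1}`. -/
def idem {R : Type*} [Field R] [Algebra R A] (ω : R) (s e : ℕ → A) {n : ℕ}
    (T : UpDownTableau n) : ℕ → A
  | 0 => 1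
  | r + 1 =>
    idem ω s e T r *
      (((candList (T.shape r)).filter (fun b => decide (b ≠ T.box (r+1)))).map fun b =>
        (content ω T (r+1) - boxContent ω (T.shape r) b)⁻¹ •
          (jm ω s e (r+1) - algebraMap R A (boxContent ω (T.shape r) b))).prod

/-- `d_k` : the number of steps among the first `len` steps of `T` adding a box
on the diagonal `k`. -/
def dAdd {n : ℕ} (T : UpDownTableau n) (len : ℕ) (k : ℤ) : ℤ :=
  (((Finset.Icc 1 len).filter fun t =>
    T.add t = true ∧ ((T.box t).2 : ℤ) - ((T.box t).1 : ℤ) = k).card : ℤ)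

/-- `d'_k` : the number of steps among the first `len` steps of `T` removing a box
on the diagonal `k`. -/
def dRem {n : ℕ} (T : UpDownTableau n) (len : ℕ) (k : ℤ) : ℤ :=
  (((Finset.Icc 1 len).filter fun t =>
    T.add t = false ∧ ((T.box t).2 : ℤ) - ((T.box t).1 : ℤ) = k).card : ℤ)

/-- `g_k = δ_{k0} + d_{k-1} + d_{k+1} - 2 d_k`. -/
def gAdd {n : ℕ} (T : UpDownTableau n) (len : ℕ) (k : ℤ) : ℤ :=
  (if k = 0 then 1 else 0) + dAdd T len (k-1) + dAdd T len (k+1) - 2 * dAdd T len k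

/-- `g'_k = d'_{k-1} + d'_{k+1} - 2 d'_k`. -/
def gRem {n : ℕ} (T : UpDownTableau n) (len : ℕ) (k : ℤ) : ℤ :=
  dRem T len (k-1) + dRem T len (k+1) - 2 * dRem T len k

/-- The diagonal `j - i` of the box of step `r`. -/
def diagOf {n : ℕ} (T : UpDownTableau n) (r : ℕ) : ℤ :=
  ((T.box r).2 : ℤ) - ((T.box r).1 : ℤ)

/-- The exponent `p_r` of an updown tableau: `p_r = 1 - g_{k_r}` if a box is added on the
diagonal `k_r` at step `r`, and `p_r = 1 - g'_{k_r}` if a box is removed, where `g, g'`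
are computed from the first `r - 1` steps. -/
def pExp {n : ℕ} (T : UpDownTableau n) (r : ℕ) : ℤ :=
  1 - (if T.add r then gAdd T (r-1) (diagOf T r) else gRem T (r-1) (diagOf T r))

/-- The factor `φ(U, T)` in the recursive definition of `f(T)`; the products over all
integers `k` are realized as products over `-r-1 ≤ k ≤ r+1`, which contains the support
of `g` and `g'` (all other factors are equal to 1). -/
def phiStep {n : ℕ} (T : UpDownTableau n) (r : ℕ) : F :=
  if T.add r then
    (∏ k ∈ (Finset.Icc (-(r:ℤ)-1) ((r:ℤ)+1)).erase (diagOf T r),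
      ((diagOf T r - k : ℤ) : F) ^ gAdd T (r-1) k) *
    ∏ k ∈ Finset.Icc (-(r:ℤ)-1) ((r:ℤ)+1),
      (((diagOf T r + k : ℤ) : F) + ωF - 1) ^ gRem T (r-1) k
  else
    (∏ k ∈ (Finset.Icc (-(r:ℤ)-1) ((r:ℤ)+1)).erase (diagOf T r),
      ((k - diagOf T r : ℤ) : F) ^ gRem T (r-1) k) *
    ∏ k ∈ Finset.Icc (-(r:ℤ)-1) ((r:ℤ)+1),
      ((1 : F) - ωF - ((diagOf T r + k : ℤ) : F)) ^ gAdd T (r-1) k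

/-- The scalar `f(T) ∈ ℂ(ω)`, defined recursively by `f(∅) = 1`, `f(T) = f(U) φ(U,T)`. -/
def fT {n : ℕ} (T : UpDownTableau n) : ℕ → F
  | 0 => 1
  | r + 1 => fT T r * phiStep T (r+1)

/-- The hook length of the box `b` in the Young diagram `μ`. -/
def hookLength (μ : YoungDiagram) (b : ℕ × ℕ) : ℕ :=
  (μ.cells.filter fun c => c.1 = b.1 ∧ b.2 < c.2).card +
  (μ.cells.filter fun c => c.2 = b.2 ∧ b.1 < c.1).card + 1

/-- The product of the hook lengths of all boxes of `μ`. -/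
def hookProd (μ : YoungDiagram) : ℕ :=
  ∏ b ∈ μ.cells, hookLength μ b

/-- Polynomials in the variables `u_1, u_2, …` over `F = ℂ(ω)`. -/
abbrev MvP : Type := MvPolynomial ℕ F

/-- The field `F(u_1, u_2, …)` of rational functions in the variables `u_r` over `ℂ(ω)`. -/
abbrev KK : Type := FractionRing MvP

/-- Substituting `u_r = c` into a polynomial in the `u`'s. -/
def substOne (r : ℕ) (c : F) : MvP →ₐ[F] MvP :=
  MvPolynomial.aeval fun t => if t = r then MvPolynomial.C c else MvPolynomial.X t

/-- The variable `u_r` as an element of `KK`. -/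
def uVar (r : ℕ) : KK := algebraMap MvP KK (MvPolynomial.X r)

/-- A constant (an element of `ℂ(ω)`) as an element of `KK`. -/
def cK (x : F) : KK := algebraMap MvP KK (MvPolynomial.C x)

/-- The element `ω` of `KK`. -/
def ωK : KK := cK ωF

/-- `RegK r c f v` : the rational function `f ∈ F(u_1, u_2, …)`, viewed as a rational
function of the variable `u_r`, is regular at `u_r = c`, with value `v` there. -/
def RegK (r : ℕ) (c : F) (f v : KK) : Prop :=
  ∃ p q : MvP, substOne r c q ≠ 0 ∧
    f = algebraMap MvP KK p / algebraMap MvP KK q ∧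
    v = algebraMap MvP KK (substOne r c p) / algebraMap MvP KK (substOne r c q)

/-- The subring of "constants": the subring generated by the `s_i`, `e_i` and the
scalars from `ℂ(ω)` (i.e. the copy of the Brauer algebra `B_n(ω)` inside `B_n(ω) ⊗ KK`). -/
def constSubK [Algebra KK A] (s e : ℕ → A) : Subring A :=
  Subring.closure (Set.range s ∪ Set.range e ∪ Set.range fun x : F => algebraMap KK A (cK x))

/-- `RegStep s e r c a v` : the element `a` of `B ⊗ F(u_1,…,u_n)`, viewed as a rational
function of `u_r`, is regular at `u_r = c` with value `v`: it can be written as a finite sum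
`a = ∑ f_i • b_i` with constant `b_i` and coordinates `f_i` regular at `u_r = c` (denominators
not vanishing at `u_r = c`), whose values at `u_r = c` give `v = ∑ f_i(c) • b_i`. -/
def RegStep [Algebra KK A] (s e : ℕ → A) (r : ℕ) (c : F) (a v : A) : Prop :=
  ∃ (m : ℕ) (f g : Fin m → KK) (b : Fin m → A),
    (∀ i, RegK r c (f i) (g i)) ∧ (∀ i, b i ∈ constSubK s e) ∧
    a = ∑ i, f i • b i ∧ v = ∑ i, g i • b i

end BrauerFusion

namespace BrauerFusion

/-!
Write `t_{ij}` for either `s_{ij}` or `e_{ij}`. Both families are obtained from `t_{i,i+1}` by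
successive conjugation, `t_{ij} = s_i t_{i+1,j} s_i`, and by the braid-type relation
`s_i t_{i+1,i+2} s_i = s_{i+1} t_{i,i+1} s_{i+1}` they also satisfy the right recursion
`t_{i,j+1} = s_j t_{ij} s_j`. Using the right recursion in `m` one gets
`s_{jm} t_{j-1,m} = t_{j-1,j} s_{jm}`, and conjugating by `s_r` (which commutes with `s_{jm}`
for `r < j - 1`) gives `s_{jm} t_{rm} = t_{rj} s_{jm}` for all `r < j`. Summing over `r`
yields the theorem.
-/

section Conjugation

variable {R A : Type*} [CommRing R] [Ring A] [Algebra R A] {n : ℕ} {ω : R} {s e : ℕ → A}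

structure IsTranspositionFamily (n : ℕ) (s : ℕ → A) (t : ℕ → ℕ → A) : Prop where
  left_rec : ∀ i j, 1 ≤ i → i + 1 < j → j ≤ n → t i j = s i * t (i + 1) j * s i
  braid : ∀ i, 1 ≤ i → i + 2 ≤ n →
    s i * t (i + 1) (i + 2) * s i = s (i + 1) * t i (i + 1) * s (i + 1)
  commute : ∀ i k, 1 ≤ i → i + 1 < k → k + 1 ≤ n → Commute (s k) (t i (i + 1))

lemma IsBrauer.commute_s (hB : IsBrauer n ω s e) {i k : ℕ} (hi : 1 ≤ i) (hik : i + 1 < k)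
    (hk : k + 1 ≤ n) : Commute (s i) (s k) :=
  hB.ss_comm i k hi hk hik

lemma conj_mul_conj {x a b : A} (hx : x * x = 1) : x * a * x * (x * b * x) = x * (a * b) * x := by
  calc x * a * x * (x * b * x) = x * a * (x * x) * b * x := by noncomm_ring
    _ = x * (a * b) * x := by rw [hx, mul_one]; noncomm_ring

lemma _root_.Commute.mul_conj {c x a : A} (h : Commute c x) :
    c * (x * a * x) = x * (c * a) * x := by
  simp only [← mul_assoc, h.eq]

lemma _root_.Commute.conj_mul {c x a : A} (h : Commute c x) :
    x * a * x * c = x * (a * c) * x := by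
  simp only [mul_assoc, h.symm.eq]

lemma sij_self_succ (i : ℕ) : sij s i (i + 1) = s i := by
  rw [sij, dif_neg (lt_irrefl _)]

lemma sij_of_lt {i j : ℕ} (h : i + 1 < j) : sij s i j = s i * sij s (i + 1) j * s i := by
  rw [sij, dif_pos h]

lemma eij_self_succ (i : ℕ) : eij s e i (i + 1) = e i :=
  if_neg (lt_irrefl _)

lemma eij_of_lt {i j : ℕ} (h : i + 1 < j) :
    eij s e i j = sij s i (j - 1) * e (j - 1) * sij s i (j - 1) :=
  if_pos h

lemma isTranspositionFamily_sij (hB : IsBrauer n ω s e) : IsTranspositionFamily n s (sij s) where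
  left_rec _ _ _ h _ := sij_of_lt h
  braid i hi hn := by
    simp only [sij_self_succ]
    exact hB.braid i hi hn
  commute i k hi hik hk := by
    rw [sij_self_succ]
    exact (hB.commute_s hi hik hk).symm

lemma isTranspositionFamily_eij (hB : IsBrauer n ω s e) :
    IsTranspositionFamily n s (eij s e) where
  left_rec i j hi hij hj := by
    rcases Nat.lt_or_ge (i + 2) j with h | h
    · have hc : Commute (s i) (e (j - 1)) := hB.se_comm i (j - 1) hi (by omega) (by omega)
      have hse : s i * e (j - 1) * s i = e (j - 1) := by
        rw [hc.eq, mul_assoc, hB.ss i hi (by omega), mul_one]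
      rw [eij_of_lt hij, eij_of_lt (by omega : i + 1 + 1 < j),
        sij_of_lt (by omega : i + 1 < j - 1)]
      calc _ = s i * sij s (i + 1) (j - 1) * (s i * e (j - 1) * s i) *
            sij s (i + 1) (j - 1) * s i := by noncomm_ring
        _ = _ := by rw [hse]; noncomm_ring
    · obtain rfl : j = i + 2 := by omega
      rw [eij_of_lt hij, eij_self_succ, show i + 2 - 1 = i + 1 by omega, sij_self_succ]
  braid i hi hn := by
    simp only [eij_self_succ]
    calc s i * e (i + 1) * s i = s i * (e (i + 1) * e i * s (i + 1)) := by
          rw [hB.ees i hi hn, ← mul_assoc]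
      _ = s (i + 1) * e i * s (i + 1) := by
          rw [← hB.see i hi hn]; noncomm_ring
  commute i k hi hik hk := by
    rw [eij_self_succ]
    exact hB.es_comm i k hi hk hik

lemma IsTranspositionFamily.right_rec {t : ℕ → ℕ → A} (hB : IsBrauer n ω s e)
    (ht : IsTranspositionFamily n s t) {i j : ℕ} (hi : 1 ≤ i) (hij : i < j) (hj : j + 1 ≤ n) :
    t i (j + 1) = s j * t i j * s j := by
  induction h : j - i generalizing i with
  | zero => omega
  | succ d ih =>
    rcases Nat.lt_or_ge (i + 1) j with hlt | hge
    · rw [ht.left_rec i (j + 1) hi (by omega) hj, ih (by omega) hlt (by omega),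
        ht.left_rec i j hi hlt (by omega), (hB.commute_s hi hlt hj).mul_conj,
        (hB.commute_s hi hlt hj).conj_mul, ← mul_assoc]
    · obtain rfl : j = i + 1 := by omega
      rw [ht.left_rec i (i + 2) hi (by omega) hj]
      exact ht.braid i hi hj

lemma commute_s_sij (hB : IsBrauer n ω s e) {i j k : ℕ} (hk : 1 ≤ k) (hki : k + 1 < i)
    (hij : i < j) (hj : j ≤ n) : Commute (s k) (sij s i j) := by
  induction h : j - i generalizing i with
  | zero => omega
  | succ d ih =>
    rcases Nat.lt_or_ge (i + 1) j with hlt | hge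
    · have hc := hB.commute_s hk hki (by omega)
      rw [sij_of_lt hlt]
      exact (hc.mul_right (ih (by omega) hlt (by omega))).mul_right hc
    · obtain rfl : j = i + 1 := by omega
      rw [sij_self_succ]
      exact hB.commute_s hk hki hj

lemma sij_succ_mul {t : ℕ → ℕ → A} (hB : IsBrauer n ω s e)
    (ht : IsTranspositionFamily n s t) {i m : ℕ} (hi : 1 ≤ i) (him : i + 1 < m) (hm : m ≤ n) :
    sij s (i + 1) m * t i m = t i (i + 1) * sij s (i + 1) m := by
  induction m, him using Nat.le_induction with
  | base =>
    rw [sij_self_succ, ht.right_rec hB hi (by omega) hm, ← mul_assoc, ← mul_assoc,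
      hB.ss (i + 1) (by omega) (by omega), one_mul]
  | succ m hm' ih =>
    have hs := (isTranspositionFamily_sij hB).right_rec hB (by omega : 1 ≤ i + 1) hm' hm
    rw [hs, ht.right_rec hB hi (by omega) hm, conj_mul_conj (hB.ss m (by omega) hm),
      ih (by omega), ← (ht.commute i m hi (by omega) hm).symm.mul_conj]

lemma sij_mul_eq_mul_sij {t : ℕ → ℕ → A} (hB : IsBrauer n ω s e)
    (ht : IsTranspositionFamily n s t) {r j m : ℕ} (hr : 1 ≤ r) (hrj : r < j) (hjm : j < m)
    (hm : m ≤ n) : sij s j m * t r m = t r j * sij s j m := by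
  induction h : j - r generalizing r with
  | zero => omega
  | succ d ih =>
    rcases Nat.lt_or_ge (r + 1) j with hlt | hge
    · have hc := commute_s_sij hB hr hlt hjm hm
      rw [ht.left_rec r m hr (by omega) hm, ht.left_rec r j hr hlt (by omega), hc.symm.mul_conj,
        ih (by omega) hlt (by omega), hc.symm.conj_mul]
    · obtain rfl : j = r + 1 := by omega
      exact sij_succ_mul hB ht hr hjm hm

end Conjugation

theorem sjm_jmM_general {A : Type*} [Ring A] [Algebra F A]
    (n j m : ℕ) (hjm : j < m) (hmn : m ≤ n)
    (s e : ℕ → A) (hB : IsBrauer n ωF s e) :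
    sij s j m * jmM ωF s e j m = jm ωF s e j * sij s j m := by
  rw [jm, jmM, jmM, mul_add, add_mul, Finset.mul_sum, Finset.sum_mul,
    ← Algebra.commutes]
  congr 1
  refine Finset.sum_congr rfl fun r hr => ?_
  obtain ⟨hr1, hrj⟩ := Finset.mem_Icc.mp hr
  rw [mul_sub, sub_mul,
    sij_mul_eq_mul_sij hB (isTranspositionFamily_sij hB) hr1 (by omega) hjm hmn,
    sij_mul_eq_mul_sij hB (isTranspositionFamily_eij hB) hr1 (by omega) hjm hmn]

/-- For `1 < j < m ≤ n`, with `x_j^{(m)} = (ω-1)/2 + ∑_{r=1}^{j-1}(s_{rm} - e_{rm})`,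
one has `s_{jm} x_j^{(m)} = x_j s_{jm}` in `B_n(ω)`, where `x_j` is the Jucys–Murphy
element.  This is stated in any algebra over `F = ℂ(ω)` whose elements `s i`, `e i`
satisfy the Brauer relations. -/
theorem sjm_jmM {A : Type*} [Ring A] [Algebra F A]
    (n j m : ℕ) (hj : 1 < j) (hjm : j < m) (hmn : m ≤ n)
    (s e : ℕ → A) (hB : IsBrauer n ωF s e) :
    sij s j m * jmM ωF s e j m = jm ωF s e j * sij s j m :=
  sjm_jmM_general n j m hjm hmn s e hB

end BrauerFusion
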